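/- arXiv:1901.03246 — 2 statements merged into one kernel-verified Lean document; each statement's English description precedes it below -/
import Mathlib

section
/- Let $a,b\in\mathbb{R}$. There exists a smooth function $\theta:[0,1]\to[0,1]$ satisfying $\theta(0)=0$, $\theta(1)=1$, $\theta'(0)=\theta'(1)=1$, $\theta''(0)=a$, $\theta''(1)=b$, and $\theta'(x)\geq 1/4$ for all $x\in[0,1]$. In particular $\theta$ is a smooth diffeomorphism of $[0,1]$. -/
open Set

set_option maxHeartbeats 1000000

/-- For any `a, b ∈ ℝ` there is a smooth function `θ : [0,1] → [0,1]` with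
`θ(0)=0`, `θ(1)=1`, `θ'(0)=θ'(1)=1`, `θ''(0)=a`, `θ''(1)=b` and `θ' ≥ 1/4` on `[0,1]`;
in particular `θ` is a smooth diffeomorphism of `[0,1]`. -/
theorem exists_smooth_reparametrisation (a b : ℝ) :
    ∃ θ : ℝ → ℝ, ContDiff ℝ (⊤ : ℕ∞) θ ∧ Set.MapsTo θ (Icc (0:ℝ) 1) (Icc (0:ℝ) 1) ∧
      θ 0 = 0 ∧ θ 1 = 1 ∧
      deriv θ 0 = 1 ∧ deriv θ 1 = 1 ∧
      deriv (deriv θ) 0 = a ∧ deriv (deriv θ) 1 = b ∧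
      (∀ x ∈ Icc (0:ℝ) 1, (1:ℝ)/4 ≤ deriv θ x) ∧
      Set.BijOn θ (Icc (0:ℝ) 1) (Icc (0:ℝ) 1) := by
  set S : ℝ := |a| + |b| with hS
  have hS0 : 0 ≤ S := by positivity
  set n : ℕ := ⌈S⌉₊ + 1 with hn
  set k : ℝ := n * (2 * Real.pi) with hk
  have hpi : (3:ℝ) < Real.pi := Real.pi_gt_three
  have hnS : S + 1 ≤ (n : ℝ) := by
    have := Nat.le_ceil S
    push_cast [hn]; linarith
  have hk6 : 6 * (S + 1) ≤ k := by
    have h1 : (n:ℝ) * 6 ≤ (n:ℝ) * (2 * Real.pi) := by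
      apply mul_le_mul_of_nonneg_left (by linarith) (by positivity)
    nlinarith
  have hk0 : 0 < k := by nlinarith
  have hkne : k ≠ 0 := ne_of_gt hk0
  have hcosk : Real.cos k = 1 := Real.cos_nat_mul_two_pi n
  have hsink : Real.sin k = 0 := by
    have h : k = ((2 * n : ℕ) : ℝ) * Real.pi := by push_cast [hk]; ring
    rw [h, Real.sin_nat_mul_pi]
  clear_value S n k
  set u : ℝ → ℝ := fun x => (1 - Real.cos (k * x)) / k ^ 2 with hu_def
  set p : ℝ → ℝ := fun x => a + (b - a) * x with hp_def
  set θ : ℝ → ℝ := fun x => x + p x * u x with hθ_def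
  have hinner : ∀ x : ℝ, HasDerivAt (fun y : ℝ => k * y) k x := by
    intro x; simpa using (hasDerivAt_id x).const_mul k
  have hu : ∀ x, HasDerivAt u (Real.sin (k * x) / k) x := by
    intro x
    have h1 : HasDerivAt (fun x : ℝ => Real.cos (k * x)) (-Real.sin (k * x) * k) x := by
      exact (Real.hasDerivAt_cos (k * x)).comp x (hinner x)
    have h2 := (h1.const_sub 1).div_const (k ^ 2)
    refine h2.congr_deriv ?_
    rw [div_eq_div_iff (pow_ne_zero 2 hkne) hkne]
    ring
  have hs : ∀ x, HasDerivAt (fun x : ℝ => Real.sin (k * x) / k) (Real.cos (k * x)) x := by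
    intro x
    have h1 : HasDerivAt (fun x : ℝ => Real.sin (k * x)) (Real.cos (k * x) * k) x := by
      exact (Real.hasDerivAt_sin (k * x)).comp x (hinner x)
    have h2 := h1.div_const k
    refine h2.congr_deriv ?_
    rw [div_eq_iff hkne]
  have hp : ∀ x, HasDerivAt p (b - a) x := by
    intro x
    have := ((hasDerivAt_id x).const_mul (b - a)).const_add a
    exact this.congr_deriv (by ring)
  set D : ℝ → ℝ := fun x => 1 + ((b - a) * u x + p x * (Real.sin (k * x) / k)) with hD_def
  have hD : ∀ x, HasDerivAt θ (D x) x := by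
    intro x
    exact (hasDerivAt_id x).add ((hp x).mul (hu x))
  have hderiv : deriv θ = D := funext fun x => (hD x).deriv
  have hD2 : ∀ x, HasDerivAt D
      ((b - a) * (Real.sin (k * x) / k) +
        ((b - a) * (Real.sin (k * x) / k) + p x * Real.cos (k * x))) x := by
    intro x
    exact (((hu x).const_mul (b - a)).add ((hp x).mul (hs x))).const_add 1
  have hu0 : u 0 = 0 := by simp [hu_def]
  have hu1 : u 1 = 0 := by simp [hu_def, hcosk]
  have hθ0 : θ 0 = 0 := by simp [hθ_def, hu0]
  have hθ1 : θ 1 = 1 := by simp [hθ_def, hu1]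
  have hD0 : D 0 = 1 := by simp [hD_def, hu0]
  have hD1 : D 1 = 1 := by simp [hD_def, hu1, hsink]
  have hDD0 : deriv D 0 = a := by
    rw [(hD2 0).deriv]
    simp [hp_def]
  have hDD1 : deriv D 1 = b := by
    rw [(hD2 1).deriv, mul_one, hsink, hcosk]
    simp [hp_def]
  clear_value u p θ D
  -- derivative bound
  have hDbound : ∀ x ∈ Icc (0:ℝ) 1, (1:ℝ)/4 ≤ D x := by
    intro x hx
    obtain ⟨hx0, hx1⟩ := hx
    have hpx : |p x| ≤ S := by
      have hpe : p x = (1 - x) * a + x * b := by simp [hp_def]; ring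
      rw [hpe]
      calc |(1 - x) * a + x * b| ≤ |(1 - x) * a| + |x * b| := abs_add_le _ _
        _ = (1 - x) * |a| + x * |b| := by
            rw [abs_mul, abs_mul, abs_of_nonneg (by linarith : (0:ℝ) ≤ 1 - x),
              abs_of_nonneg hx0]
        _ ≤ S := by rw [hS]; nlinarith [abs_nonneg a, abs_nonneg b]
    have hux : |u x| ≤ 2 / k ^ 2 := by
      rw [hu_def]
      rw [abs_div, abs_of_nonneg (by positivity : (0:ℝ) ≤ k ^ 2)]
      apply div_le_div_of_nonneg_right ?_ (by positivity)
      rw [abs_le]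
      constructor
      · nlinarith [Real.cos_le_one (k * x)]
      · nlinarith [Real.neg_one_le_cos (k * x)]
    have hba : |b - a| ≤ S := by
      rw [hS]
      calc |b - a| ≤ |b| + |a| := abs_sub _ _
        _ = |a| + |b| := by ring
    have hsx : |Real.sin (k * x) / k| ≤ 1 / k := by
      rw [abs_div, abs_of_pos hk0]
      apply div_le_div_of_nonneg_right (Real.abs_sin_le_one _) hk0.le
    have habs : |D x - 1| ≤ S * (2 / k ^ 2) + S * (1 / k) := by
      have : D x - 1 = (b - a) * u x + p x * (Real.sin (k * x) / k) := by
        rw [hD_def]; ring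
      rw [this]
      calc |(b - a) * u x + p x * (Real.sin (k * x) / k)|
          ≤ |(b - a) * u x| + |p x * (Real.sin (k * x) / k)| := abs_add_le _ _
        _ = |b - a| * |u x| + |p x| * |Real.sin (k * x) / k| := by rw [abs_mul, abs_mul]
        _ ≤ S * (2 / k ^ 2) + S * (1 / k) :=
            add_le_add (mul_le_mul hba hux (abs_nonneg _) hS0)
              (mul_le_mul hpx hsx (abs_nonneg _) hS0)
    have hsmall : S * (2 / k ^ 2) + S * (1 / k) ≤ 3 / 4 := by
      have heq : S * (2 / k ^ 2) + S * (1 / k) = (2 * S + S * k) / k ^ 2 := by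
        field_simp
      rw [heq, div_le_iff₀ (by positivity)]
      nlinarith [mul_le_mul_of_nonneg_right hk6 hk0.le, mul_nonneg hS0 hk0.le, hk6, hS0]
    have := neg_abs_le (D x - 1)
    have := habs
    linarith [neg_abs_le (D x - 1), habs]
  -- smoothness
  have hcont : ContDiff ℝ (⊤ : ℕ∞) θ := by
    rw [hθ_def, hp_def, hu_def]
    apply contDiff_id.add
    apply ContDiff.mul
    · exact contDiff_const.add (contDiff_const.mul contDiff_id)
    · apply ContDiff.div_const
      apply contDiff_const.sub
      exact Real.contDiff_cos.comp (contDiff_const.mul contDiff_id)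
  have hθc : Continuous θ := hcont.continuous
  -- monotonicity
  have hmono : StrictMonoOn θ (Icc (0:ℝ) 1) := by
    apply strictMonoOn_of_deriv_pos (convex_Icc 0 1) hθc.continuousOn
    intro x hx
    rw [interior_Icc] at hx
    rw [hderiv]
    have := hDbound x ⟨hx.1.le, hx.2.le⟩
    linarith
  have hmonoOn : MonotoneOn θ (Icc (0:ℝ) 1) := hmono.monotoneOn
  have h0mem : (0:ℝ) ∈ Icc (0:ℝ) 1 := ⟨le_refl 0, zero_le_one⟩
  have h1mem : (1:ℝ) ∈ Icc (0:ℝ) 1 := ⟨zero_le_one, le_refl 1⟩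
  have hmaps : Set.MapsTo θ (Icc (0:ℝ) 1) (Icc (0:ℝ) 1) := by
    intro x hx
    constructor
    · rw [← hθ0]; exact hmonoOn h0mem hx hx.1
    · rw [← hθ1]; exact hmonoOn hx h1mem hx.2
  have hsurj : Set.SurjOn θ (Icc (0:ℝ) 1) (Icc (0:ℝ) 1) := by
    intro y hy
    have := intermediate_value_Icc zero_le_one hθc.continuousOn
    rw [hθ0, hθ1] at this
    exact this hy
  refine ⟨θ, hcont, hmaps, hθ0, hθ1, ?_, ?_, ?_, ?_, ?_, hmaps, hmono.injOn, hsurj⟩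
  · rw [hderiv]; exact hD0
  · rw [hderiv]; exact hD1
  · rw [hderiv]; exact hDD0
  · rw [hderiv]; exact hDD1
  · intro x hx; rw [hderiv]; exact hDbound x hx
end

section
/- Let $\varepsilon\in(0,1/3)$ and consider the Theta-network consisting of two arcs of a unit circle, each of arclength $\varepsilon$, joined by the straight chord between their endpoints (a segment of length $\sqrt{2}\sqrt{1-\cos\varepsilon}$). Its elastic energy is $E_\mu=2\varepsilon+\mu(2\varepsilon+\sqrt{2}\sqrt{1-\cos\varepsilon})$, and $E_\mu\to 0$ as $\varepsilon\to 0$. Consequently, $\inf\{E_\mu(\Theta):\Theta\text{ a Theta-network}\}=0$ and the infimum is not attained. -/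
open Set Filter Real
open scoped Topology

/-!
Each network in the family has energy `2ε + μ(2ε + chord)`, which is a continuous function of `ε`
vanishing at `ε = 0`; so it tends to `0` as the arcs shrink, while it is strictly positive for
every actual network. Hence `0` is the infimum and it is not attained.
-/

/-- Length `2 sin (ε / 2) = √2 √(1 - cos ε)` of the chord of the unit circle subtending an arc of
length `ε`. -/
noncomputable def chordLength (ε : ℝ) : ℝ := √2 * √(1 - cos ε)

/-- The energy `E_μ` of the Theta-network made of two unit-circle arcs of length `ε` and the
chord joining their endpoints. -/
noncomputable def thetaEnergy (μ ε : ℝ) : ℝ := 2 * ε + μ * (2 * ε + chordLength ε)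

lemma chordLength_nonneg (ε : ℝ) : 0 ≤ chordLength ε :=
  mul_nonneg (sqrt_nonneg _) (sqrt_nonneg _)

@[simp]
lemma chordLength_zero : chordLength 0 = 0 := by
  simp [chordLength]

@[fun_prop]
lemma continuous_chordLength : Continuous chordLength := by
  unfold chordLength
  fun_prop

lemma integral_curvature_sq_add_eq_thetaEnergy (μ ε : ℝ) :
    2 * (∫ _ in (0:ℝ)..ε, ((1:ℝ) ^ 2 + μ)) + ∫ _ in (0:ℝ)..chordLength ε, ((0:ℝ) ^ 2 + μ)
      = thetaEnergy μ ε := by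
  simp only [intervalIntegral.integral_const, sub_zero, smul_eq_mul, thetaEnergy]
  ring

@[fun_prop]
lemma continuous_thetaEnergy (μ : ℝ) : Continuous (thetaEnergy μ) := by
  unfold thetaEnergy
  fun_prop

@[simp]
lemma thetaEnergy_zero (μ : ℝ) : thetaEnergy μ 0 = 0 := by
  simp [thetaEnergy]

lemma thetaEnergy_pos {μ ε : ℝ} (hμ : 0 ≤ μ) (hε : 0 < ε) : 0 < thetaEnergy μ ε := by
  have := chordLength_nonneg ε
  unfold thetaEnergy
  positivity

lemma tendsto_thetaEnergy_nhdsGT_zero (μ : ℝ) :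
    Tendsto (thetaEnergy μ) (𝓝[>] 0) (𝓝 0) := by
  simpa using ((continuous_thetaEnergy μ).tendsto 0).mono_left nhdsWithin_le_nhds

lemma isGLB_image_of_tendsto {α β : Type*} [TopologicalSpace β] [LinearOrder β]
    [OrderTopology β] {f : α → β} {s : Set α} {l : Filter α} [l.NeBot] {b : β}
    (hs : s ∈ l) (hb : ∀ x ∈ s, b ≤ f x) (hf : Tendsto f l (𝓝 b)) : IsGLB (f '' s) b :=
  isGLB_of_mem_closure (forall_mem_image.2 hb) <|
    mem_closure_of_tendsto hf (mem_of_superset hs fun _ => mem_image_of_mem f)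

/-- The degenerating Theta--networks: two unit-circle arcs of arclength `ε`
(curvature `1`) joined by a chord of length `√2 √(1-cos ε)` (curvature `0`) have
elastic energy `E_μ = 2ε + μ(2ε + √2 √(1-cos ε))`, which tends to `0` as `ε → 0⁺`.
Consequently the infimum of the elastic energy over this family of Theta--networks
is `0` and it is not attained. -/
theorem theta_network_energy_infimum_zero (μ : ℝ) (hμ : 0 < μ) :
    (∀ ε ∈ Ioo (0:ℝ) (1/3),
      2 * (∫ s in (0:ℝ)..ε, ((1:ℝ)^2 + μ)) +
        (∫ s in (0:ℝ)..(Real.sqrt 2 * Real.sqrt (1 - Real.cos ε)), ((0:ℝ)^2 + μ))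
        = 2*ε + μ*(2*ε + Real.sqrt 2 * Real.sqrt (1 - Real.cos ε))) ∧
    Tendsto (fun ε : ℝ => 2*ε + μ*(2*ε + Real.sqrt 2 * Real.sqrt (1 - Real.cos ε)))
      (nhdsWithin 0 (Ioi 0)) (nhds 0) ∧
    IsGLB ((fun ε : ℝ => 2*ε + μ*(2*ε + Real.sqrt 2 * Real.sqrt (1 - Real.cos ε))) ''
      Ioo (0:ℝ) (1/3)) 0 ∧
    (0:ℝ) ∉ (fun ε : ℝ => 2*ε + μ*(2*ε + Real.sqrt 2 * Real.sqrt (1 - Real.cos ε))) ''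
      Ioo (0:ℝ) (1/3) := by
  have hpos : ∀ ε ∈ Ioo (0:ℝ) (1/3), 0 < thetaEnergy μ ε := fun ε hε =>
    thetaEnergy_pos hμ.le hε.1
  refine ⟨fun ε _ => integral_curvature_sq_add_eq_thetaEnergy μ ε,
    tendsto_thetaEnergy_nhdsGT_zero μ,
    isGLB_image_of_tendsto (Ioo_mem_nhdsGT (by norm_num)) (fun ε hε => (hpos ε hε).le)
      (tendsto_thetaEnergy_nhdsGT_zero μ), ?_⟩
  rintro ⟨ε, hε, hzero⟩
  exact (hpos ε hε).ne' hzero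
end
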